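/- Let n ≥ 3 and let φ be a CNF formula over Boolean variables indexed by Fin n consisting of m ≥ 1 clauses, where clause i is given by an injection c_i : Fin 3 → Fin n and signs σ_i : Fin 3 → Bool, and x : Fin n → Bool satisfies clause i iff there exists k with x(c_i k) = σ_i k. For clause i and a partial assignment a : Fin 3 → Bool satisfying clause i (i.e., ∃ k, a k = σ_i k), define for j ∈ Fin n and b ∈ Bool: w_{i,a}(j,b) = (if b = a k then 1 else 0) when j = c_i k for some k, and w_{i,a}(j,b) = 1/2 otherwise. Define S(x) = (1/(7m)) · Σ_{i} Σ_{a : Fin 3 → Bool, a satisfies clause i} Π_{j ∈ Fin n} w_{i,a}(j, x j). Then for every x : Fin n → Bool, S(x) = (number of clauses of φ satisfied by x) · 2^{3−n} / (7m). -/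

import Mathlib

/-- The leaf weight `w_{i,a}(j,b)` for a clause with variables `c : Fin 3 → Fin n` and a
partial assignment `a : Fin 3 → Bool`: it equals `if b = a k then 1 else 0` when `j = c k`
for some `k`, and `1/2` otherwise. -/
noncomputable def wfun {n : ℕ} (c : Fin 3 → Fin n) (a : Fin 3 → Bool)
    (j : Fin n) (b : Bool) : ℝ :=
  if h : ∃ k, c k = j then (if b = a h.choose then 1 else 0) else 1 / 2

/-- The SPN value `S(x) = (1/(7m)) · Σ_i Σ_{a satisfying clause i} Π_j w_{i,a}(j, x j)`. -/
noncomputable def SCnf (n m : ℕ) (c : Fin m → Fin 3 → Fin n) (σ : Fin m → Fin 3 → Bool)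
    (x : Fin n → Bool) : ℝ :=
  (1 / (7 * m)) * ∑ i, ∑ a ∈ Finset.univ.filter (fun a : Fin 3 → Bool => ∃ k, a k = σ i k),
    ∏ j, wfun (c i) a j (x j)

/-! For a clause on the variables `c`, the product `∏ j, w_{a}(j, x j)` is an indicator of
`x ∘ c = a` scaled by `2^(3-n)`, so summing it over the satisfying partial assignments `a`
picks out the single term `a = x ∘ c`, present exactly when `x` satisfies the clause. -/

open Finset

variable {n : ℕ} {c : Fin 3 → Fin n}

lemma wfun_apply_of_injective (hc : c.Injective) (a : Fin 3 → Bool) (k : Fin 3) (b : Bool) :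
    wfun c a (c k) b = if b = a k then 1 else 0 := by
  have h : ∃ k', c k' = c k := ⟨k, rfl⟩
  rw [wfun, dif_pos h, hc h.choose_spec]

lemma wfun_of_notMem_range {j : Fin n} (hj : j ∉ Set.range c) (a : Fin 3 → Bool) (b : Bool) :
    wfun c a j b = 1 / 2 :=
  dif_neg hj

lemma prod_wfun_eq_ite (hc : c.Injective) (a : Fin 3 → Bool) (x : Fin n → Bool) :
    ∏ j, wfun c a j (x j) = if x ∘ c = a then (2 : ℝ) ^ ((3 : ℤ) - n) else 0 := by
  classical
  have h3n : 3 ≤ n := Fin.le_of_injective c hc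
  have on_range : ∏ j ∈ univ.image c, wfun c a j (x j) = if x ∘ c = a then 1 else 0 := by
    simp only [prod_image fun k _ k' _ h => hc h, wfun_apply_of_injective hc, prod_boole,
      mem_univ, true_imp_iff, funext_iff, Function.comp_apply]
  have off_range : ∏ j ∈ (univ.image c)ᶜ, wfun c a j (x j) = (1 / 2 : ℝ) ^ (n - 3) := by
    rw [prod_congr rfl fun j hj => wfun_of_notMem_range (by simpa using hj) a (x j),
      prod_const, card_compl, card_image_of_injective _ hc]
    simp
  have half_pow : (1 / 2 : ℝ) ^ (n - 3) = 2 ^ ((3 : ℤ) - n) := by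
    rw [one_div, inv_pow, ← zpow_natCast, ← zpow_neg, Nat.cast_sub h3n, neg_sub, Nat.cast_ofNat]
  rw [← prod_mul_prod_compl (univ.image c), on_range, off_range, half_pow, ite_mul, one_mul,
    zero_mul]

lemma sum_satisfying_prod_wfun (hc : c.Injective) (σ : Fin 3 → Bool) (x : Fin n → Bool) :
    ∑ a ∈ univ.filter (fun a : Fin 3 → Bool => ∃ k, a k = σ k), ∏ j, wfun c a j (x j)
      = if ∃ k, x (c k) = σ k then (2 : ℝ) ^ ((3 : ℤ) - n) else 0 := by
  simp only [prod_wfun_eq_ite hc, sum_ite_eq, mem_filter, mem_univ, true_and, Function.comp_apply]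

theorem stmt6_general (n m : ℕ)
    (c : Fin m → Fin 3 → Fin n) (hc : ∀ i, Function.Injective (c i))
    (σ : Fin m → Fin 3 → Bool) (x : Fin n → Bool) :
    SCnf n m c σ x =
      ((Finset.univ.filter (fun i : Fin m => ∃ k, x (c i k) = σ i k)).card : ℝ)
        * (2 : ℝ) ^ ((3 : ℤ) - n) / (7 * m) := by
  rw [SCnf, Finset.sum_congr rfl fun i _ => sum_satisfying_prod_wfun (hc i) (σ i) x,
    ← Finset.sum_filter, Finset.sum_const, nsmul_eq_mul]
  ring

/-- For every `x : Fin n → Bool`,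
`S(x) = (number of clauses satisfied by x) · 2^(3−n) / (7m)`. -/
theorem stmt6 (n m : ℕ) (hn : 3 ≤ n) (hm : 1 ≤ m)
    (c : Fin m → Fin 3 → Fin n) (hc : ∀ i, Function.Injective (c i))
    (σ : Fin m → Fin 3 → Bool) (x : Fin n → Bool) :
    SCnf n m c σ x =
      ((Finset.univ.filter (fun i : Fin m => ∃ k, x (c i k) = σ i k)).card : ℝ)
        * (2 : ℝ) ^ ((3 : ℤ) - n) / (7 * m) :=
  stmt6_general n m c hc σ x
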